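/- Let A₁, …, A_m be Hermitian n×n matrices forming a frame for ℂ^{n×r} (n ≥ r). Then the frame is generalized phase retrievable — i.e. the map x x* ↦ (⟨x x*, A_j⟩_ℝ)_{j=1}^m is injective on {x x* : x ∈ ℂ^{n×r}} — if and only if for every U₁ ∈ ℂ^{n×r} with orthonormal columns (U₁* U₁ = I_r), the real span of {A_j U₁ : j = 1,…,m} equals the orthogonal complement in (ℂ^{n×r}, ⟨·,·⟩_ℝ) of the space {U₁ K : K ∈ ℂ^{r×r}, K* = −K}. -/

import Mathlib

open Matrix Filter
open scoped ComplexOrder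

noncomputable def frob {p q : ℕ} (x : Matrix (Fin p) (Fin q) ℂ) : ℝ :=
  Real.sqrt (Matrix.trace (xᴴ * x)).re

noncomputable def rinner {p q : ℕ} (X Y : Matrix (Fin p) (Fin q) ℂ) : ℝ :=
  (Matrix.trace (Xᴴ * Y)).re

/-- The square root of a positive semi-definite matrix, as defined in Mathlib (Dec 2024);
removed from Mathlib since. -/
noncomputable def Matrix.PosSemidef.sqrt {n 𝕜 : Type*} [Fintype n] [RCLike 𝕜] [DecidableEq n]
    {A : Matrix n n 𝕜} (hA : A.PosSemidef) : Matrix n n 𝕜 :=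
  hA.1.eigenvectorUnitary.1 * diagonal ((↑) ∘ (√·) ∘ hA.1.eigenvalues) *
    (star hA.1.eigenvectorUnitary : Matrix n n 𝕜)

noncomputable def nuclear {p q : ℕ} (x : Matrix (Fin p) (Fin q) ℂ) : ℝ :=
  (Matrix.trace (Matrix.posSemidef_conjTranspose_mul_self x).sqrt).re

noncomputable def theta {n r : ℕ} (x : Matrix (Fin n) (Fin r) ℂ) : Matrix (Fin n) (Fin n) ℂ :=
  (Matrix.posSemidef_self_mul_conjTranspose x).sqrt

noncomputable def psi {n r : ℕ} (x : Matrix (Fin n) (Fin r) ℂ) : Matrix (Fin n) (Fin n) ℂ :=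
  frob x • theta x

noncomputable def Dmet {n r : ℕ} (x y : Matrix (Fin n) (Fin r) ℂ) : ℝ :=
  ⨅ U : Matrix.unitaryGroup (Fin r) ℂ, frob (x - y * (U : Matrix (Fin r) (Fin r) ℂ))

noncomputable def dmet {n r : ℕ} (x y : Matrix (Fin n) (Fin r) ℂ) : ℝ :=
  ⨅ U : Matrix.unitaryGroup (Fin r) ℂ,
    frob (x - y * (U : Matrix (Fin r) (Fin r) ℂ)) * frob (x + y * (U : Matrix (Fin r) (Fin r) ℂ))

/-!
The Gram map `x ↦ x xᴴ` is quadratic: `(U + w)(U + w)ᴴ - (U - w)(U - w)ᴴ = 2 (U wᴴ + w Uᴴ)`,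
and for Hermitian `B` one has `⟨U wᴴ + w Uᴴ, B⟩ = 2 ⟨B U, w⟩`. If `U` is an isometry, the map
`w ↦ U wᴴ + w Uᴴ` is injective on the horizontal space `{w | Uᴴ w Hermitian}`, which is the
orthogonal complement of `{U K | Kᴴ = -K}`. Hence the span condition at `U` says exactly that no
nonzero horizontal `w` is orthogonal to every `A j * U`. Such a `w` would make `U + w` and `U - w`
indistinguishable; conversely, for `x, y` with equal measurements, pick an isometry `U` whose range
contains that of `x + y`: then `2 (x xᴴ - y yᴴ) = U wᴴ + w Uᴴ` for a horizontal `w`, which is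
orthogonal to every `A j * U`, hence zero.
-/

theorem Submodule.span_range_eq_iff_forall_inner {𝕜 E ι : Type*} [RCLike 𝕜]
    [NormedAddCommGroup E] [InnerProductSpace 𝕜 E] [FiniteDimensional 𝕜 E]
    (v : ι → E) {W : Submodule 𝕜 E} (hv : ∀ j, v j ∈ W) :
    span 𝕜 (Set.range v) = W ↔ ∀ w ∈ W, (∀ j, inner 𝕜 (v j) w = 0) → w = 0 := by
  have mem_orthogonal_iff (w : E) :
      w ∈ (span 𝕜 (Set.range v))ᗮ ↔ ∀ j, inner 𝕜 (v j) w = 0 := by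
    refine ⟨fun hw j => hw _ (subset_span (Set.mem_range_self j)), fun h u hu => ?_⟩
    induction hu using span_induction with
    | mem u hu => obtain ⟨j, rfl⟩ := hu; exact h j
    | zero => exact inner_zero_left w
    | add u u' _ _ hu hu' => rw [inner_add_left, hu, hu', add_zero]
    | smul c u _ hu => rw [inner_smul_left, hu, mul_zero]
  simp_rw [← mem_orthogonal_iff]
  constructor
  · rintro rfl w hw hw'
    rw [← Submodule.mem_bot 𝕜, ← inf_orthogonal_eq_bot (span 𝕜 (Set.range v))]
    exact ⟨hw, hw'⟩
  · intro h
    rw [← sup_orthogonal_inf_of_hasOrthogonalProjection (span_le.2 (Set.range_subset_iff.2 hv)),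
      (eq_bot_iff (a := (span 𝕜 (Set.range v))ᗮ ⊓ W)).2 fun w hw => (mem_bot 𝕜).2 (h w hw.2 hw.1),
      sup_bot_eq]

section RealInner

variable {p q : ℕ}

noncomputable def matrixToEuclidean (p q : ℕ) :
    Matrix (Fin p) (Fin q) ℂ ≃ₗ[ℝ] EuclideanSpace ℂ (Fin p × Fin q) where
  toFun X := WithLp.toLp 2 fun ik => X ik.1 ik.2
  invFun v := Matrix.of fun i k => v (i, k)
  map_add' _ _ := rfl
  map_smul' _ _ := rfl
  left_inv _ := rfl
  right_inv _ := rfl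

theorem inner_matrixToEuclidean (X Y : Matrix (Fin p) (Fin q) ℂ) :
    inner ℝ (matrixToEuclidean p q X) (matrixToEuclidean p q Y) = rinner X Y := by
  simp only [rinner, Matrix.trace, Matrix.diag_apply, Matrix.mul_apply,
    Matrix.conjTranspose_apply, Complex.re_sum, PiLp.inner_apply, Fintype.sum_prod_type]
  rw [Finset.sum_comm]
  refine Finset.sum_congr rfl fun k _ => Finset.sum_congr rfl fun i _ => ?_
  rw [mul_comm]
  exact Complex.inner (X i k) (Y i k)

theorem rinner_self_eq_zero {X : Matrix (Fin p) (Fin q) ℂ} : rinner X X = 0 ↔ X = 0 := by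
  rw [← inner_matrixToEuclidean, inner_self_eq_zero, LinearEquiv.map_eq_zero_iff]

theorem rinner_sub_left (X Y Z : Matrix (Fin p) (Fin q) ℂ) :
    rinner (X - Y) Z = rinner X Z - rinner Y Z := by
  simp only [← inner_matrixToEuclidean, map_sub, inner_sub_left]

theorem rinner_sub_right (X Y Z : Matrix (Fin p) (Fin q) ℂ) :
    rinner X (Y - Z) = rinner X Y - rinner X Z := by
  simp only [← inner_matrixToEuclidean, map_sub, inner_sub_right]

theorem rinner_add_left (X Y Z : Matrix (Fin p) (Fin q) ℂ) :
    rinner (X + Y) Z = rinner X Z + rinner Y Z := by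
  simp only [← inner_matrixToEuclidean, map_add, inner_add_left]

theorem rinner_neg_left (X Y : Matrix (Fin p) (Fin q) ℂ) : rinner (-X) Y = -rinner X Y := by
  simp only [← inner_matrixToEuclidean, map_neg, inner_neg_left]

theorem rinner_conjTranspose (X Y : Matrix (Fin p) (Fin q) ℂ) : rinner Xᴴ Yᴴ = rinner X Y := by
  rw [rinner, rinner, Matrix.conjTranspose_conjTranspose, Matrix.trace_mul_comm,
    ← Matrix.conjTranspose_conjTranspose X, ← Matrix.conjTranspose_mul, Matrix.trace_conjTranspose,
    Complex.star_def, Complex.conj_re, Matrix.conjTranspose_conjTranspose]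

theorem isHermitian_iff_forall_rinner_eq_zero {r : ℕ} (M : Matrix (Fin r) (Fin r) ℂ) :
    M.IsHermitian ↔ ∀ K : Matrix (Fin r) (Fin r) ℂ, Kᴴ = -K → rinner K M = 0 := by
  have rinner_skew {K : Matrix (Fin r) (Fin r) ℂ} (hK : Kᴴ = -K) : rinner K Mᴴ = -rinner K M := by
    rw [← rinner_conjTranspose, hK, Matrix.conjTranspose_conjTranspose, rinner_neg_left]
  refine ⟨fun hM K hK => ?_, fun h => ?_⟩
  · linarith [hM.eq ▸ rinner_skew hK]
  · have hK : (M - Mᴴ)ᴴ = -(M - Mᴴ) := by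
      rw [Matrix.conjTranspose_sub, Matrix.conjTranspose_conjTranspose, neg_sub]
    have : rinner (M - Mᴴ) (M - Mᴴ) = 0 := by
      rw [rinner_sub_right, rinner_skew hK, h _ hK]
      ring
    exact (sub_eq_zero.1 (rinner_self_eq_zero.1 this)).symm

theorem rinner_mul_conjTranspose_add {n r : ℕ} {B : Matrix (Fin n) (Fin n) ℂ} (hB : B.IsHermitian)
    (U w : Matrix (Fin n) (Fin r) ℂ) : rinner (U * wᴴ + w * Uᴴ) B = 2 * rinner (B * U) w := by
  have h : rinner (U * wᴴ) B = rinner (B * U) w := by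
    rw [rinner, rinner, Matrix.conjTranspose_mul, Matrix.conjTranspose_mul,
      Matrix.conjTranspose_conjTranspose, hB.eq, Matrix.trace_mul_comm, Matrix.mul_assoc,
      ← Matrix.mul_assoc, Matrix.trace_mul_comm]
  have h' : rinner (w * Uᴴ) B = rinner (U * wᴴ) B := by
    rw [← rinner_conjTranspose, hB.eq, Matrix.conjTranspose_mul, Matrix.conjTranspose_conjTranspose]
  rw [rinner_add_left, h', h, two_mul]

theorem span_range_eq_iff_forall_rinner {ι : Type*} (v : ι → Matrix (Fin p) (Fin q) ℂ)
    {W : Submodule ℝ (Matrix (Fin p) (Fin q) ℂ)} (hv : ∀ j, v j ∈ W) :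
    Submodule.span ℝ (Set.range v) = W ↔ ∀ w ∈ W, (∀ j, rinner (v j) w = 0) → w = 0 := by
  have h := Submodule.span_range_eq_iff_forall_inner (matrixToEuclidean p q ∘ v)
    (W := W.map (matrixToEuclidean p q).toLinearMap) fun j => Submodule.mem_map_of_mem (hv j)
  rw [Set.range_comp, ← LinearEquiv.coe_coe, ← Submodule.map_span,
    (Submodule.map_injective_of_injective (matrixToEuclidean p q).injective).eq_iff] at h
  simp only [h, Submodule.mem_map, forall_exists_index, and_imp, forall_apply_eq_imp_iff₂,
    Function.comp_apply, LinearEquiv.coe_coe, inner_matrixToEuclidean, LinearEquiv.map_eq_zero_iff]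

end RealInner

section Horizontal

variable {𝕜 m n : Type*} [RCLike 𝕜]

theorem gram_add_sub_gram_sub [Fintype n] (U w : Matrix m n 𝕜) :
    (U + w) * (U + w)ᴴ - (U - w) * (U - w)ᴴ = (2 : 𝕜) • (U * wᴴ + w * Uᴴ) := by
  rw [two_smul]
  simp only [Matrix.conjTranspose_add, Matrix.conjTranspose_sub, Matrix.add_mul, Matrix.mul_add,
    Matrix.sub_mul, Matrix.mul_sub]
  abel

theorem add_mul_conjTranspose_sub_add [Fintype n] (x y : Matrix m n 𝕜) :
    (x + y) * (x - y)ᴴ + (x - y) * (x + y)ᴴ = (2 : 𝕜) • (x * xᴴ - y * yᴴ) := by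
  rw [two_smul]
  simp only [Matrix.conjTranspose_add, Matrix.conjTranspose_sub, Matrix.add_mul, Matrix.mul_add,
    Matrix.sub_mul, Matrix.mul_sub]
  abel

variable [Fintype m]

noncomputable def horizontalSpace (U : Matrix m n 𝕜) : Submodule ℝ (Matrix m n 𝕜) :=
  (selfAdjoint.submodule ℝ (Matrix n n 𝕜)).comap (mulLeftLinearMap n ℝ Uᴴ)

theorem mem_horizontalSpace {U w : Matrix m n 𝕜} :
    w ∈ horizontalSpace U ↔ (Uᴴ * w).IsHermitian :=
  Iff.rfl

theorem mul_mem_horizontalSpace {B : Matrix m m 𝕜} (hB : B.IsHermitian) (U : Matrix m n 𝕜) :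
    B * U ∈ horizontalSpace U := by
  rw [mem_horizontalSpace, ← Matrix.mul_assoc]
  exact Matrix.isHermitian_conjTranspose_mul_mul U hB

variable [Fintype n] [DecidableEq n]

theorem eq_zero_of_mem_horizontalSpace {U w : Matrix m n 𝕜} (hU : Uᴴ * U = 1)
    (hw : w ∈ horizontalSpace U) (h : U * wᴴ + w * Uᴴ = 0) : w = 0 := by
  have hH : wᴴ * U = Uᴴ * w := by
    rw [← Matrix.conjTranspose_conjTranspose U, ← Matrix.conjTranspose_mul,
      Matrix.conjTranspose_conjTranspose, (mem_horizontalSpace.1 hw).eq]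
  have hw' : U * (Uᴴ * w) + w = 0 := by
    simpa [Matrix.add_mul, Matrix.mul_assoc, hU, hH] using congrArg (· * U) h
  have hUw : Uᴴ * w = 0 := by
    have htwice : (2 : 𝕜) • (Uᴴ * w) = 0 := by
      simpa [Matrix.mul_add, ← Matrix.mul_assoc, hU, two_smul] using congrArg (Uᴴ * ·) hw'
    exact (smul_eq_zero.mp htwice).resolve_left two_ne_zero
  simpa [hUw] using hw'

theorem exists_mem_horizontalSpace {U a : Matrix m n 𝕜} (hU : Uᴴ * U = 1)
    (ha : U * (Uᴴ * a) = a) (b : Matrix m n 𝕜) :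
    ∃ w ∈ horizontalSpace U, U * wᴴ + w * Uᴴ = a * bᴴ + b * aᴴ := by
  set M := Uᴴ * b * aᴴ * U
  set S := (2⁻¹ : ℝ) • (M - Mᴴ)
  have hS : Sᴴ = -S := by
    rw [Matrix.conjTranspose_smul, star_trivial, Matrix.conjTranspose_sub,
      Matrix.conjTranspose_conjTranspose, ← smul_neg, neg_sub]
  have haU : aᴴ * U * Uᴴ = aᴴ := by
    simpa [Matrix.conjTranspose_mul, Matrix.mul_assoc] using congrArg Matrix.conjTranspose ha
  -- `b aᴴ U` alone satisfies the equation; subtracting `U S`, with `S` the skew part of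
  -- `Uᴴ (b aᴴ U)`, makes `Uᴴ w` Hermitian without changing `U wᴴ + w Uᴴ`.
  refine ⟨b * aᴴ * U - U * S, ?_, ?_⟩
  · have hUw : Uᴴ * (b * aᴴ * U - U * S) = (2⁻¹ : ℝ) • (M + Mᴴ) := by
      rw [Matrix.mul_sub, ← Matrix.mul_assoc Uᴴ U, hU, Matrix.one_mul]
      simp only [S, M, Matrix.mul_assoc]
      module
    rw [mem_horizontalSpace, hUw, Matrix.IsHermitian, Matrix.conjTranspose_smul, star_trivial,
      Matrix.conjTranspose_add, Matrix.conjTranspose_conjTranspose, add_comm]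
  · have hab : U * (b * aᴴ * U)ᴴ = a * bᴴ := by
      simp only [Matrix.conjTranspose_mul, Matrix.conjTranspose_conjTranspose, ← Matrix.mul_assoc]
      rw [Matrix.mul_assoc U, ha]
    have hba : b * aᴴ * U * Uᴴ = b * aᴴ := by
      rw [Matrix.mul_assoc (b * aᴴ), Matrix.mul_assoc b, ← Matrix.mul_assoc aᴴ, haU]
    rw [Matrix.conjTranspose_sub, Matrix.mul_sub, Matrix.sub_mul, hab, hba,
      Matrix.conjTranspose_mul, hS]
    simp only [Matrix.neg_mul, Matrix.mul_neg, Matrix.mul_assoc]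
    abel

end Horizontal

theorem coe_horizontalSpace {n r : ℕ} (U : Matrix (Fin n) (Fin r) ℂ) :
    (horizontalSpace U : Set (Matrix (Fin n) (Fin r) ℂ)) =
      {w | ∀ K : Matrix (Fin r) (Fin r) ℂ, Kᴴ = -K → (Matrix.trace ((U * K)ᴴ * w)).re = 0} := by
  ext w
  simp only [SetLike.mem_coe, mem_horizontalSpace, isHermitian_iff_forall_rinner_eq_zero,
    Set.mem_ofPred_eq, Matrix.conjTranspose_mul, Matrix.mul_assoc]
  rfl

theorem exists_isometry_mul_conjTranspose_mul_eq {𝕜 : Type*} [RCLike 𝕜] {n r : ℕ} (hrn : r ≤ n)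
    (a : Matrix (Fin n) (Fin r) 𝕜) :
    ∃ U : Matrix (Fin n) (Fin r) 𝕜, Uᴴ * U = 1 ∧ U * (Uᴴ * a) = a := by
  -- Gram–Schmidt on the columns of `a`, padded with zeros to `n` vectors: the basis vectors of
  -- index `≥ r` are orthogonal to every column of `a`.
  let col (k : Fin n) : EuclideanSpace 𝕜 (Fin n) :=
    WithLp.toLp 2 fun i => if h : (k : ℕ) < r then a i ⟨k, h⟩ else 0
  let b := InnerProductSpace.gramSchmidtOrthonormalBasis (𝕜 := 𝕜) (by simp) col
  have inner_eq (x y : EuclideanSpace 𝕜 (Fin n)) : inner 𝕜 x y = ∑ i, star (x i) * y i := by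
    simp [PiLp.inner_apply, mul_comm]
  refine ⟨Matrix.of fun i k => b (Fin.castLE hrn k) i, ?_, ?_⟩
  · ext k l
    have := orthonormal_iff_ite.1 b.orthonormal (Fin.castLE hrn k) (Fin.castLE hrn l)
    simpa [Matrix.mul_apply, Matrix.one_apply, inner_eq, (Fin.castLE_injective hrn).eq_iff]
      using this
  · ext i j
    have hsum := congrArg (· i) (b.sum_repr' (col (Fin.castLE hrn j)))
    have hzero (k : Fin n) (hk : k ∉ Set.range (Fin.castLE hrn)) :
        inner 𝕜 (b k) (col (Fin.castLE hrn j)) • b k = 0 := by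
      have hrk : r ≤ k := by
        by_contra! hkr
        exact hk ⟨⟨k, hkr⟩, rfl⟩
      rw [InnerProductSpace.gramSchmidtOrthonormalBasis_inv_triangular _ _
        (show Fin.castLE hrn j < k from Fin.lt_def.2 (j.isLt.trans_le hrk)), zero_smul]
    rw [← Fintype.sum_of_injective _ (Fin.castLE_injective hrn) _ _ hzero (fun _ => rfl)] at hsum
    simpa [Matrix.mul_apply, inner_eq, col, Finset.mul_sum, mul_comm, mul_left_comm] using hsum

theorem phase_retrievable_iff_span_general (n r m : ℕ) (hrn : r ≤ n)
    (A : Fin m → Matrix (Fin n) (Fin n) ℂ) (hA : ∀ j, (A j).IsHermitian) :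
    (∀ x y : Matrix (Fin n) (Fin r) ℂ,
        (∀ j, rinner (x * xᴴ) (A j) = rinner (y * yᴴ) (A j)) → x * xᴴ = y * yᴴ) ↔
    (∀ U₁ : Matrix (Fin n) (Fin r) ℂ, U₁ᴴ * U₁ = 1 →
      (Submodule.span ℝ (Set.range fun j => A j * U₁) :
          Set (Matrix (Fin n) (Fin r) ℂ)) =
        {w : Matrix (Fin n) (Fin r) ℂ |
          ∀ K : Matrix (Fin r) (Fin r) ℂ, Kᴴ = -K →
            (Matrix.trace ((U₁ * K)ᴴ * w)).re = 0}) := by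
  simp_rw [← coe_horizontalSpace, SetLike.coe_set_eq,
    span_range_eq_iff_forall_rinner _ fun j => mul_mem_horizontalSpace (hA j) _]
  constructor
  · intro hinj U hU w hw hperp
    refine eq_zero_of_mem_horizontalSpace hU hw ?_
    have hgram := hinj (U + w) (U - w) fun j => by
      have := rinner_sub_left ((U + w) * (U + w)ᴴ) ((U - w) * (U - w)ᴴ) (A j)
      rw [gram_add_sub_gram_sub, two_smul, rinner_add_left,
        rinner_mul_conjTranspose_add (hA j), hperp j] at this
      linarith
    have hzero := gram_add_sub_gram_sub U w
    rw [hgram, sub_self, eq_comm] at hzero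
    exact (smul_eq_zero.1 hzero).resolve_left two_ne_zero
  · intro h x y hxy
    obtain ⟨U, hU, hUa⟩ := exists_isometry_mul_conjTranspose_mul_eq hrn (x + y)
    obtain ⟨w, hw, hw_eq⟩ := exists_mem_horizontalSpace hU hUa (x - y)
    rw [add_mul_conjTranspose_sub_add] at hw_eq
    have hw0 := h U hU w hw fun j => by
      have := rinner_mul_conjTranspose_add (hA j) U w
      rw [hw_eq, two_smul, rinner_add_left, rinner_sub_left, hxy j, sub_self] at this
      linarith
    rw [hw0, Matrix.conjTranspose_zero, Matrix.mul_zero, Matrix.zero_mul, add_zero, eq_comm] at hw_eq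
    exact sub_eq_zero.1 ((smul_eq_zero.1 hw_eq).resolve_left two_ne_zero)

/-- a frame `{A_j}` of Hermitian matrices for `ℂ^{n×r}` is generalized
phase retrievable if and only if for every `U₁ ∈ ℂ^{n×r}` with orthonormal columns the
real span of `{A_j U₁}` equals the orthogonal complement (w.r.t.
`⟨z,w⟩_ℝ = Re tr(z* w)`) of `{U₁ K : K* = −K}`. -/
theorem phase_retrievable_iff_span (n r m : ℕ) (hr : 1 ≤ r) (hrn : r ≤ n)
    (A : Fin m → Matrix (Fin n) (Fin n) ℂ) (hA : ∀ j, (A j).IsHermitian)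
    (hframe : ∃ a b : ℝ, 0 < a ∧ a ≤ b ∧ ∀ z : Matrix (Fin n) (Fin r) ℂ,
      a * frob z ^ 2 ≤ ∑ j, |rinner (A j) (z * zᴴ)| ∧
      ∑ j, |rinner (A j) (z * zᴴ)| ≤ b * frob z ^ 2) :
    (∀ x y : Matrix (Fin n) (Fin r) ℂ,
        (∀ j, rinner (x * xᴴ) (A j) = rinner (y * yᴴ) (A j)) → x * xᴴ = y * yᴴ) ↔
    (∀ U₁ : Matrix (Fin n) (Fin r) ℂ, U₁ᴴ * U₁ = 1 →
      (Submodule.span ℝ (Set.range fun j => A j * U₁) :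
          Set (Matrix (Fin n) (Fin r) ℂ)) =
        {w : Matrix (Fin n) (Fin r) ℂ |
          ∀ K : Matrix (Fin r) (Fin r) ℂ, Kᴴ = -K →
            (Matrix.trace ((U₁ * K)ᴴ * w)).re = 0}) :=
  phase_retrievable_iff_span_general n r m hrn A hA
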